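/- arXiv:math/0703926 — 3 statements merged into one kernel-verified Lean document; each statement's English description precedes it below -/
import Mathlib

section
/- Let A be a finite generating set of ℤ² and let B ⊂ ℝ² be the convex hull of A ∪ (−A). If a₁, a₂ ∈ A ∪ (−A) are adjacent vertices of the polygon B and i₁, i₂ are nonnegative integers, then the word obtained by concatenating i₁ copies of a₁ and i₂ copies of a₂ is a geodesic word in A; that is, |i₁a₁ + i₂a₂|_A = i₁ + i₂. -/
/-!
If a word of length `n < m = i₁ + i₂` represented `i₁ a₁ + i₂ a₂`, then, `B` being convex and
containing `0`, the point `(i₁ a₁ + i₂ a₂) / m` of the edge `[a₁, a₂]` would be `(n / m) b` for some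
`b ∈ B`, so it would lie strictly between `b` and `0`. The edge being a face of `B`, it would
contain `0`, hence every `a ∈ A` (as `0` is the midpoint of `a` and `-a`). Then `A` would lie on a
line through the origin and could not generate `ℤ²`.
-/

open Pointwise

/-- The word length `|v|_A` of `v ∈ ℤ²` with respect to the finite generating set `A`:
the length of a shortest word in the letters of `A` and their inverses (negatives)
representing `v`. -/
noncomputable def wlenZ2 (A : Finset (ℤ × ℤ)) (v : ℤ × ℤ) : ℕ :=
  sInf {n | ∃ w : List (ℤ × ℤ), (∀ a ∈ w, a ∈ A ∨ -a ∈ A) ∧ w.length = n ∧ w.sum = v}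

/-- The standard embedding of `ℤ²` into `ℝ²`. -/
def toR2 (v : ℤ × ℤ) : ℝ × ℝ := ((v.1 : ℝ), (v.2 : ℝ))

section Convex

variable {E : Type*} [AddCommGroup E] [Module ℝ E]

theorem Convex.list_sum_mem_length_smul {B : Set E} (hB : Convex ℝ B) (hne : B.Nonempty)
    {l : List E} (hl : ∀ x ∈ l, x ∈ B) : l.sum ∈ (l.length : ℝ) • B := by
  induction l with
  | nil => simp [Set.zero_smul_set hne]
  | cons x l ih =>
    rw [List.sum_cons, List.length_cons, Nat.cast_succ, add_comm,
      hB.add_smul zero_le_one l.length.cast_nonneg, one_smul]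
    exact Set.add_mem_add (hl x List.mem_cons_self)
      (ih fun y hy => hl y (List.mem_cons_of_mem x hy))

theorem zero_mem_openSegment_self_neg (x : E) : (0 : E) ∈ openSegment ℝ x (-x) :=
  ⟨1 / 2, 1 / 2, by norm_num, by norm_num, by norm_num, by module⟩

theorem IsExtreme.zero_mem_of_smul_mem {B F : Set E} (hF : IsExtreme ℝ B F) (h0 : (0 : E) ∈ B)
    {x : E} (hx : x ∈ B) {t : ℝ} (ht₀ : 0 ≤ t) (ht₁ : t < 1) (htx : t • x ∈ F) : (0 : E) ∈ F := by
  rcases ht₀.eq_or_lt with rfl | ht₀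
  · simpa using htx
  · exact hF.right_mem_of_mem_openSegment hx h0 htx
      ⟨t, 1 - t, ht₀, by linarith, by ring, by simp⟩

theorem IsExtreme.mem_of_neg_mem {B F : Set E} (hF : IsExtreme ℝ B F) (h0 : (0 : E) ∈ F)
    {x : E} (hx : x ∈ B) (hnx : -x ∈ B) : x ∈ F :=
  hF.left_mem_of_mem_openSegment hx hnx h0 (zero_mem_openSegment_self_neg x)

theorem mem_span_sub_of_mem_segment {x y z : E} (h0 : (0 : E) ∈ segment ℝ x y)
    (hz : z ∈ segment ℝ x y) : z ∈ ℝ ∙ (x - y) := by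
  obtain ⟨a₀, b₀, -, -, hab₀, h0⟩ := h0
  obtain ⟨a, b, -, -, hab, rfl⟩ := hz
  refine Submodule.mem_span_singleton.mpr ⟨a - a₀, ?_⟩
  have hb : b = 1 - a := by linarith
  have hb₀ : b₀ = 1 - a₀ := by linarith
  subst hb hb₀
  linear_combination (norm := module) -h0

theorem IsExtreme.zero_mem_segment_of_list_sum {B : Set E} {x y : E} (hB : Convex ℝ B)
    (h0 : (0 : E) ∈ B) (hS : IsExtreme ℝ B (segment ℝ x y)) {l : List E} (hl : ∀ z ∈ l, z ∈ B)
    {i j : ℕ} (hsum : l.sum = i • x + j • y) (hlen : l.length < i + j) :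
    (0 : E) ∈ segment ℝ x y := by
  obtain ⟨b, hb, hlb⟩ := hB.list_sum_mem_length_smul ⟨0, h0⟩ hl
  have hm : (0 : ℝ) < i + j := by exact_mod_cast (Nat.zero_le _).trans_lt hlen
  have hmid : (l.length / (i + j) : ℝ) • b ∈ segment ℝ x y := by
    refine ⟨i / (i + j), j / (i + j), by positivity, by positivity, by field_simp, ?_⟩
    simp only [div_eq_inv_mul, mul_smul, ← smul_add, hlb, hsum, Nat.cast_smul_eq_nsmul]
  refine hS.zero_mem_of_smul_mem h0 hb (by positivity) ?_ hmid
  rw [div_lt_one hm]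
  exact_mod_cast hlen

end Convex

def toR2AddHom : ℤ × ℤ →+ ℝ × ℝ :=
  (Int.castAddHom ℝ).prodMap (Int.castAddHom ℝ)

@[simp] theorem coe_toR2AddHom : ⇑toR2AddHom = toR2 := rfl

theorem zero_one_notMem_span_singleton_of_one_zero_mem {R : Type*} [CommRing R] [Nontrivial R]
    {d : R × R} (h : ((1 : R), (0 : R)) ∈ R ∙ d) : ((0 : R), (1 : R)) ∉ R ∙ d := by
  intro h'
  obtain ⟨c₁, hc₁⟩ := Submodule.mem_span_singleton.mp h
  obtain ⟨c₂, hc₂⟩ := Submodule.mem_span_singleton.mp h'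
  simp only [Prod.ext_iff, Prod.smul_fst, Prod.smul_snd, smul_eq_mul] at hc₁ hc₂
  exact one_ne_zero (by linear_combination -c₂ * d.2 * hc₁.1 - hc₂.2 + c₂ * d.1 * hc₁.2)

theorem exists_toR2_notMem_span_singleton {A : Set (ℤ × ℤ)} (hA : AddSubgroup.closure A = ⊤)
    (d : ℝ × ℝ) : ∃ a ∈ A, toR2 a ∉ ℝ ∙ d := by
  by_contra! h
  have hle : AddSubgroup.closure A ≤ (ℝ ∙ d).toAddSubgroup.comap toR2AddHom :=
    (AddSubgroup.closure_le _).mpr h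
  rw [hA] at hle
  refine zero_one_notMem_span_singleton_of_one_zero_mem ?_ (?_ : ((0 : ℝ), (1 : ℝ)) ∈ ℝ ∙ d)
  · simpa [toR2] using hle (AddSubgroup.mem_top ((1, 0) : ℤ × ℤ))
  · simpa [toR2] using hle (AddSubgroup.mem_top ((0, 1) : ℤ × ℤ))

section Letters

variable {A : Set (ℤ × ℤ)} {a : ℤ × ℤ}

theorem toR2_mem_convexHull_of_letter (ha : a ∈ A ∨ -a ∈ A) :
    toR2 a ∈ convexHull ℝ (toR2 '' (A ∪ -A)) :=
  subset_convexHull ℝ _ ⟨a, ha, rfl⟩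

theorem neg_toR2_mem_convexHull_of_letter (ha : a ∈ A ∨ -a ∈ A) :
    -toR2 a ∈ convexHull ℝ (toR2 '' (A ∪ -A)) := by
  rw [← coe_toR2AddHom, ← map_neg, coe_toR2AddHom]
  exact toR2_mem_convexHull_of_letter (by rwa [neg_neg, or_comm])

theorem zero_mem_convexHull_of_letter (ha : a ∈ A ∨ -a ∈ A) :
    (0 : ℝ × ℝ) ∈ convexHull ℝ (toR2 '' (A ∪ -A)) :=
  (convex_convexHull ℝ _).openSegment_subset (toR2_mem_convexHull_of_letter ha)
    (neg_toR2_mem_convexHull_of_letter ha) (zero_mem_openSegment_self_neg _)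

end Letters

section WordLength

variable {A : Finset (ℤ × ℤ)} {w : List (ℤ × ℤ)} {x : ℤ × ℤ}

theorem wlenZ2_le_length (hw : ∀ a ∈ w, a ∈ A ∨ -a ∈ A) (hx : w.sum = x) :
    wlenZ2 A x ≤ w.length :=
  Nat.sInf_le ⟨w, hw, rfl, hx⟩

theorem exists_word_length_eq_wlenZ2 (hw : ∀ a ∈ w, a ∈ A ∨ -a ∈ A) (hx : w.sum = x) :
    ∃ v : List (ℤ × ℤ), (∀ a ∈ v, a ∈ A ∨ -a ∈ A) ∧ v.length = wlenZ2 A x ∧ v.sum = x :=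
  Nat.sInf_mem (s := {n | ∃ v : List (ℤ × ℤ), (∀ a ∈ v, a ∈ A ∨ -a ∈ A) ∧ v.length = n ∧
    v.sum = x}) ⟨_, w, hw, rfl, hx⟩

end WordLength

theorem geodesic_from_adjacent_vertices_general
    (A : Finset (ℤ × ℤ)) (hA : AddSubgroup.closure (A : Set (ℤ × ℤ)) = ⊤)
    (B : Set (ℝ × ℝ))
    (hB : B = convexHull ℝ (toR2 '' ((A : Set (ℤ × ℤ)) ∪ (-(A : Set (ℤ × ℤ))))))
    (a₁ a₂ : ℤ × ℤ)
    (ha₁ : a₁ ∈ A ∨ -a₁ ∈ A) (ha₂ : a₂ ∈ A ∨ -a₂ ∈ A)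
    (hadj : IsExtreme ℝ B (segment ℝ (toR2 a₁) (toR2 a₂)))
    (i₁ i₂ : ℕ) :
    wlenZ2 A (i₁ • a₁ + i₂ • a₂) = i₁ + i₂ := by
  subst hB
  set w := List.replicate i₁ a₁ ++ List.replicate i₂ a₂
  have hw : ∀ a ∈ w, a ∈ A ∨ -a ∈ A := by
    simp only [w, List.mem_append, List.mem_replicate]
    rintro a (⟨-, rfl⟩ | ⟨-, rfl⟩) <;> assumption
  have hsum : w.sum = i₁ • a₁ + i₂ • a₂ := by simp [w, List.sum_replicate]
  have hlen : w.length = i₁ + i₂ := by simp [w]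
  refine ((wlenZ2_le_length hw hsum).trans_eq hlen).antisymm ?_
  by_contra! hlt
  obtain ⟨v, hv, hvlen, hvsum⟩ := exists_word_length_eq_wlenZ2 hw hsum
  have h0 : (0 : ℝ × ℝ) ∈ segment ℝ (toR2 a₁) (toR2 a₂) := by
    refine hadj.zero_mem_segment_of_list_sum (convex_convexHull ℝ _)
      (zero_mem_convexHull_of_letter ha₁) (l := v.map toR2) ?_ ?_ (by simpa [hvlen, hlen] using hlt)
    · exact List.forall_mem_map.mpr fun a ha => toR2_mem_convexHull_of_letter (hv a ha)
    · rw [← coe_toR2AddHom, ← map_list_sum, hvsum, map_add, map_nsmul, map_nsmul]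
  obtain ⟨a, ha, hout⟩ := exists_toR2_notMem_span_singleton hA (toR2 a₁ - toR2 a₂)
  exact hout (mem_span_sub_of_mem_segment h0 (hadj.mem_of_neg_mem h0
    (toR2_mem_convexHull_of_letter (Or.inl ha)) (neg_toR2_mem_convexHull_of_letter (Or.inl ha))))

/-- Let `A` be a finite generating set of `ℤ²` and let `B ⊂ ℝ²` be the convex
hull of `A ∪ (-A)`. If `a₁, a₂ ∈ A ∪ (-A)` are adjacent vertices of the polygon `B` (distinct
extreme points of `B` joined by an edge, i.e. whose segment is an extreme (face) subset of `B`)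
and `i₁, i₂` are nonnegative integers, then `i₁ a₁ + i₂ a₂` has word length exactly `i₁ + i₂`. -/
theorem geodesic_from_adjacent_vertices
    (A : Finset (ℤ × ℤ)) (hA : AddSubgroup.closure (A : Set (ℤ × ℤ)) = ⊤)
    (B : Set (ℝ × ℝ))
    (hB : B = convexHull ℝ (toR2 '' ((A : Set (ℤ × ℤ)) ∪ (-(A : Set (ℤ × ℤ))))))
    (a₁ a₂ : ℤ × ℤ)
    (ha₁ : a₁ ∈ A ∨ -a₁ ∈ A) (ha₂ : a₂ ∈ A ∨ -a₂ ∈ A)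
    (hne : a₁ ≠ a₂)
    (hv₁ : toR2 a₁ ∈ Set.extremePoints ℝ B)
    (hv₂ : toR2 a₂ ∈ Set.extremePoints ℝ B)
    (hadj : IsExtreme ℝ B (segment ℝ (toR2 a₁) (toR2 a₂)))
    (i₁ i₂ : ℕ) :
    wlenZ2 A (i₁ • a₁ + i₂ • a₂) = i₁ + i₂ :=
  geodesic_from_adjacent_vertices_general A hA B hB a₁ a₂ ha₁ ha₂ hadj i₁ i₂
end

section
/- Let A be a finite generating set of the discrete Heisenberg group H. Then there are constants C, D, E ∈ ℝ with D > 0 such that the following holds. Let n ∈ ℤ, let a₁a₂⋯a_m be a word of minimal length in the letters of A ∪ A⁻¹ representing z^n, and let f : ℝ² → ℝ be a linear functional of norm 1. Then there is a subword a_i a_{i+1} ⋯ a_j of a₁⋯a_m with C√|n| ≥ j − i ≥ D√|n| − E and C√|n| ≥ |f(φ(a_i a_{i+1} ⋯ a_j))| ≥ D√|n| − E. -/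
/-- The discrete Heisenberg group `H = ⟨x,y | [x,[x,y]], [y,[x,y]]⟩`, realized as triples
`⟨a, b, c⟩` of integers (the unitriangular 3×3 integer matrix with superdiagonal `a, b` and
corner `c`), so that `x = ⟨1,0,0⟩`, `y = ⟨0,1,0⟩` and `x^i * y^j * z^k = ⟨i, j, i*j + k⟩`. -/
@[ext] structure Heis where
  a : ℤ
  b : ℤ
  c : ℤ

namespace Heis

instance : Mul Heis := ⟨fun g h => ⟨g.a + h.a, g.b + h.b, g.c + h.c + g.a * h.b⟩⟩
instance : One Heis := ⟨⟨0, 0, 0⟩⟩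
instance : Inv Heis := ⟨fun g => ⟨-g.a, -g.b, g.a * g.b - g.c⟩⟩

@[simp] lemma mul_a (g h : Heis) : (g * h).a = g.a + h.a := rfl
@[simp] lemma mul_b (g h : Heis) : (g * h).b = g.b + h.b := rfl
@[simp] lemma mul_c (g h : Heis) : (g * h).c = g.c + h.c + g.a * h.b := rfl
@[simp] lemma one_a : (1 : Heis).a = 0 := rfl
@[simp] lemma one_b : (1 : Heis).b = 0 := rfl
@[simp] lemma one_c : (1 : Heis).c = 0 := rfl
@[simp] lemma inv_a (g : Heis) : g⁻¹.a = -g.a := rfl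
@[simp] lemma inv_b (g : Heis) : g⁻¹.b = -g.b := rfl
@[simp] lemma inv_c (g : Heis) : g⁻¹.c = g.a * g.b - g.c := rfl

instance : Group Heis where
  mul_assoc g h k := by ext <;> simp <;> ring
  one_mul g := by ext <;> simp
  mul_one g := by ext <;> simp
  inv_mul_cancel g := by ext <;> simp

/-- The standard generator `x` of the Heisenberg group. -/
def x : Heis := ⟨1, 0, 0⟩
/-- The standard generator `y` of the Heisenberg group. -/
def y : Heis := ⟨0, 1, 0⟩
/-- The central element `z = [x,y] = x⁻¹y⁻¹xy`, generating the center; every element of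
`Heis` is uniquely of the form `x^i * y^j * z^k`. -/
def z : Heis := ⟨0, 0, 1⟩

/-- The abelianization map `φ : Heis → Heis_ab ≅ ℤ²`, sending `x^i y^j z^k` to `(i,j)`. -/
def φ (g : Heis) : ℤ × ℤ := (g.a, g.b)

/-- The exponent of `z` in the normal form of `g`:  the unique `k` with
`g = x^i * y^j * z^k` (where `(i,j) = φ g`). -/
def zexp (g : Heis) : ℤ := g.c - g.a * g.b

end Heis

/-- `A` is a generating set of the group `G`. -/
def IsGenSet {G : Type*} [Group G] (A : Finset G) : Prop :=
  Subgroup.closure (A : Set G) = ⊤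

/-- A word in the letters of `A ∪ A⁻¹`. -/
def IsWordOn {G : Type*} [Group G] (A : Finset G) (w : List G) : Prop :=
  ∀ a ∈ w, a ∈ A ∨ a⁻¹ ∈ A

/-- The word length `|g|_A` of `g` with respect to the finite generating set `A`:
the length of a shortest word in the letters of `A` and their inverses representing `g`. -/
noncomputable def wlen {G : Type*} [Group G] (A : Finset G) (g : G) : ℕ :=
  sInf {n | ∃ w : List G, IsWordOn A w ∧ w.length = n ∧ w.prod = g}

/-- The standard embedding of `ℤ² ≅ Heis_ab` into the Euclidean plane. -/
noncomputable def toE2 (v : ℤ × ℤ) : EuclideanSpace ℝ (Fin 2) :=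
  (WithLp.equiv 2 (Fin 2 → ℝ)).symm ![(v.1 : ℝ), (v.2 : ℝ)]


/-!
Since `z ^ (k * k)` is the commutator of `x ^ k` and `y ^ k`, a minimal word for `z ^ n` has
length at most `K √|n|`.

Fix a unit vector `(p, q)` and write `u g`, `v g` for the components of `φ g` along `(p, q)` and
along `(q, -p)`. Correcting the central coordinate `c - ab/2` of exponential coordinates by
`- u g * v g / 2` gives a function `Φ = dirArea p q` with `Φ (g * h) = Φ g + Φ h - u g * v h`
and `Φ (z ^ n) = n`. Along a word, `Φ` therefore changes by at most `M (1 + F)` per letter, where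
`F` is the largest `|u|` on a prefix of the word, so `|n| ≤ K √|n| M (1 + F)`, i.e. `F ≳ √|n|`.
A prefix attaining `F` is the required subword: its length is at least `F / M` and at most the
length of the whole word.
-/

section Words

variable {G : Type*} [Group G] {A : Finset G}

lemma IsWordOn.append {w₁ w₂ : List G} (h₁ : IsWordOn A w₁) (h₂ : IsWordOn A w₂) :
    IsWordOn A (w₁ ++ w₂) :=
  fun a ha => (List.mem_append.1 ha).elim (h₁ a) (h₂ a)

lemma IsWordOn.reverse_map_inv {w : List G} (h : IsWordOn A w) :
    IsWordOn A (w.map (·⁻¹)).reverse := by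
  intro a ha
  obtain ⟨b, hb, rfl⟩ := List.mem_map.1 (List.mem_reverse.1 ha)
  simpa only [inv_inv, or_comm] using h b hb

lemma wlen_prod_le_length {w : List G} (hw : IsWordOn A w) : wlen A w.prod ≤ w.length :=
  Nat.sInf_le ⟨w, hw, rfl, rfl⟩

lemma wlen_one (A : Finset G) : wlen A 1 = 0 :=
  Nat.le_zero.1 (wlen_prod_le_length (A := A) (w := []) (by simp [IsWordOn]))

lemma exists_bound_on_letters (A : Finset G) (s : G → ℝ) :
    ∃ M, ∀ a, (a ∈ A ∨ a⁻¹ ∈ A) → s a ≤ M := by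
  classical
  obtain ⟨M, hM⟩ := ((A ∪ A.image (·⁻¹)).image s).exists_le
  refine ⟨M, fun a ha => hM _ (Finset.mem_image_of_mem s ?_)⟩
  rcases ha with ha | ha
  · exact Finset.mem_union_left _ ha
  · exact Finset.mem_union_right _ (Finset.mem_image.2 ⟨a⁻¹, ha, inv_inv a⟩)

namespace IsGenSet

lemma exists_word (hA : IsGenSet A) (g : G) : ∃ w, IsWordOn A w ∧ w.prod = g := by
  induction hA ▸ Subgroup.mem_top g using Subgroup.closure_induction with
  | mem a ha => exact ⟨[a], by simpa [IsWordOn] using Or.inl ha, List.prod_singleton⟩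
  | one => exact ⟨[], by simp [IsWordOn], List.prod_nil⟩
  | mul _ _ _ _ ih₁ ih₂ =>
    obtain ⟨w₁, hw₁, rfl⟩ := ih₁
    obtain ⟨w₂, hw₂, rfl⟩ := ih₂
    exact ⟨w₁ ++ w₂, hw₁.append hw₂, List.prod_append⟩
  | inv _ _ ih =>
    obtain ⟨w, hw, rfl⟩ := ih
    exact ⟨_, hw.reverse_map_inv, (List.prod_inv_reverse w).symm⟩

lemma exists_word_length_eq_wlen (hA : IsGenSet A) (g : G) :
    ∃ w, IsWordOn A w ∧ w.length = wlen A g ∧ w.prod = g := by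
  obtain ⟨w, hw, hg⟩ := hA.exists_word g
  have hne : {n | ∃ w : List G, IsWordOn A w ∧ w.length = n ∧ w.prod = g}.Nonempty :=
    ⟨w.length, w, hw, rfl, hg⟩
  exact Nat.sInf_mem hne

lemma wlen_mul_le (hA : IsGenSet A) (g h : G) : wlen A (g * h) ≤ wlen A g + wlen A h := by
  obtain ⟨w₁, hw₁, hl₁, rfl⟩ := hA.exists_word_length_eq_wlen g
  obtain ⟨w₂, hw₂, hl₂, rfl⟩ := hA.exists_word_length_eq_wlen h
  rw [← List.prod_append, ← hl₁, ← hl₂, ← List.length_append]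
  exact wlen_prod_le_length (hw₁.append hw₂)

lemma wlen_list_prod_le (hA : IsGenSet A) (l : List G) :
    wlen A l.prod ≤ (l.map (wlen A)).sum := by
  induction l with
  | nil => simp [wlen_one]
  | cons g l ih =>
    rw [List.prod_cons, List.map_cons, List.sum_cons]
    exact (hA.wlen_mul_le _ _).trans (Nat.add_le_add_left ih _)

lemma wlen_inv_le (hA : IsGenSet A) (g : G) : wlen A g⁻¹ ≤ wlen A g := by
  obtain ⟨w, hw, hl, rfl⟩ := hA.exists_word_length_eq_wlen g
  rw [List.prod_inv_reverse, ← hl, ← List.length_map (f := (·⁻¹)), ← List.length_reverse]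
  exact wlen_prod_le_length hw.reverse_map_inv

lemma wlen_pow_le (hA : IsGenSet A) (g : G) (k : ℕ) : wlen A (g ^ k) ≤ k * wlen A g := by
  induction k with
  | zero => simp [wlen_one]
  | succ k ih =>
    calc wlen A (g ^ (k + 1)) ≤ wlen A (g ^ k) + wlen A g := pow_succ g k ▸ hA.wlen_mul_le _ _
      _ ≤ (k + 1) * wlen A g := by rw [add_mul, one_mul]; omega

lemma wlen_zpow_le (hA : IsGenSet A) (g : G) (n : ℤ) : wlen A (g ^ n) ≤ wlen A (g ^ n.natAbs) := by
  obtain ⟨m, rfl | rfl⟩ := Int.eq_nat_or_neg n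
  · rw [zpow_natCast, Int.natAbs_natCast]
  · rw [zpow_neg, zpow_natCast, Int.natAbs_neg, Int.natAbs_natCast]
    exact hA.wlen_inv_le _

end IsGenSet

end Words

lemma Real.sqrt_le_of_le_mul_sqrt {x c : ℝ} (hc : 0 ≤ c) (h : x ≤ c * √x) : √x ≤ c := by
  rcases (Real.sqrt_nonneg x).eq_or_lt with hx | hx
  · exact hx ▸ hc
  · refine le_of_mul_le_mul_right ?_ hx
    rwa [Real.mul_self_sqrt (Real.sqrt_pos.1 hx).le]

lemma one_div_sq_mul_sub_one_le {B s F L : ℝ} (hB : 1 ≤ B) (hF : 0 ≤ F) (hFL : F ≤ B * L)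
    (hs : s ≤ B * (1 + F)) : 1 / B ^ 2 * s - 1 ≤ F ∧ 1 / B ^ 2 * s - 1 ≤ L := by
  have hB0 : 0 < B := zero_lt_one.trans_le hB
  have h : 1 / B ^ 2 * s ≤ (1 + F) / B := by
    rw [one_div_mul_eq_div, div_le_div_iff₀ (by positivity) hB0]
    nlinarith
  have hFB : F / B ≤ L := (div_le_iff₀' hB0).2 hFL
  have hB1 : 1 / B ≤ 1 := (div_le_one hB0).2 hB
  constructor
  · linarith [div_le_self (by positivity : 0 ≤ 1 + F) hB]
  · rw [add_div] at h; linarith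

lemma abs_sub_le_length_mul_of_step_le {G : Type*} [Monoid G] (Φ : G → ℝ) (B : ℝ) (w : List G)
    (h : ∀ u a, u ++ [a] <+: w → |Φ (u.prod * a) - Φ u.prod| ≤ B) :
    |Φ w.prod - Φ 1| ≤ w.length * B := by
  induction w using List.reverseRecOn with
  | nil => simp
  | append_singleton w a ih =>
    have hstep := h w a List.prefix_rfl
    have hprev := ih fun u b hu => h u b (hu.trans (List.prefix_append w [a]))
    rw [List.prod_append, List.prod_singleton, List.length_append, List.length_singleton]
    calc |Φ (w.prod * a) - Φ 1| ≤ |Φ (w.prod * a) - Φ w.prod| + |Φ w.prod - Φ 1| :=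
          abs_sub_le _ _ _
      _ ≤ ((w.length + 1 : ℕ) : ℝ) * B := by push_cast; linarith

lemma List.exists_prefix_forall_le {α : Type*} (w : List α) (g : List α → ℝ) :
    ∃ u, u <+: w ∧ ∀ v, v <+: w → g v ≤ g u := by
  obtain ⟨u, hu, hmax⟩ := Set.exists_max_image {v | v ∈ w.inits} g w.inits.finite_toSet
    ⟨[], (List.mem_inits _ _).2 List.nil_prefix⟩
  exact ⟨u, (List.mem_inits _ _).1 hu, fun v hv => hmax v ((List.mem_inits _ _).2 hv)⟩

lemma exists_apply_toE2_eq (f : EuclideanSpace ℝ (Fin 2) →L[ℝ] ℝ) :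
    ∃ p q : ℝ, p ^ 2 + q ^ 2 = ‖f‖ ^ 2 ∧ ∀ v, f (toE2 v) = p * v.1 + q * v.2 := by
  set e := (InnerProductSpace.toDual ℝ (EuclideanSpace ℝ (Fin 2))).symm f
  refine ⟨e 0, e 1, ?_, fun v => ?_⟩
  · rw [← LinearIsometryEquiv.norm_map (InnerProductSpace.toDual ℝ _).symm f,
      EuclideanSpace.real_norm_sq_eq, Fin.sum_univ_two]
  · rw [← InnerProductSpace.toDual_symm_apply, PiLp.inner_apply, Fin.sum_univ_two]
    simp [toE2, e, mul_comm]

namespace Heis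

lemma z_zpow (n : ℤ) : z ^ n = ⟨0, 0, n⟩ := by
  induction n using Int.induction_on with
  | zero => rfl
  | succ k ih => rw [zpow_add_one, ih]; ext <;> simp [z]
  | pred k ih => rw [zpow_sub_one, ih]; ext <;> simp [z, sub_eq_add_neg]

lemma x_pow (k : ℕ) : x ^ k = ⟨k, 0, 0⟩ := by
  induction k with
  | zero => rfl
  | succ k ih => rw [pow_succ, ih]; ext <;> simp [x]

lemma y_pow (k : ℕ) : y ^ k = ⟨0, k, 0⟩ := by
  induction k with
  | zero => rfl
  | succ k ih => rw [pow_succ, ih]; ext <;> simp [y]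

lemma commutator_x_pow_y_pow (k : ℕ) : (x ^ k)⁻¹ * (y ^ k)⁻¹ * x ^ k * y ^ k = z ^ (k * k) := by
  rw [x_pow, y_pow, ← zpow_natCast, z_zpow]
  ext <;> simp

lemma wlen_z_pow_le {A : Finset Heis} (hA : IsGenSet A) (m : ℕ) :
    wlen A (z ^ m) ≤ 2 * Nat.sqrt m * (wlen A x + wlen A y + wlen A z) := by
  set k := Nat.sqrt m
  have hle : k * k ≤ m := Nat.sqrt_le m
  have hlt : m < (k + 1) * (k + 1) := Nat.lt_succ_sqrt m
  have hsplit : z ^ m = [(x ^ k)⁻¹, (y ^ k)⁻¹, x ^ k, y ^ k, z ^ (m - k * k)].prod := by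
    simp only [List.prod_cons, List.prod_nil, mul_one, ← mul_assoc, commutator_x_pow_y_pow,
      ← pow_add, Nat.add_sub_cancel' hle]
  have hrem : m - k * k ≤ 2 * k := by
    have : (k + 1) * (k + 1) = k * k + 2 * k + 1 := by ring
    omega
  have hx := hA.wlen_pow_le x k
  have hy := hA.wlen_pow_le y k
  have hz := hA.wlen_pow_le z (m - k * k)
  have hxi := hA.wlen_inv_le (x ^ k)
  have hyi := hA.wlen_inv_le (y ^ k)
  rw [hsplit]
  refine (hA.wlen_list_prod_le _).trans ?_
  simp only [List.map_cons, List.map_nil, List.sum_cons, List.sum_nil]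
  nlinarith [Nat.mul_le_mul_right (wlen A z) hrem]

lemma exists_wlen_z_zpow_le {A : Finset Heis} (hA : IsGenSet A) :
    ∃ K : ℝ, 1 ≤ K ∧ ∀ n : ℤ, (wlen A (z ^ n) : ℝ) ≤ K * √|(n : ℝ)| := by
  set W := wlen A x + wlen A y + wlen A z
  refine ⟨2 * W + 1, by linarith [(W.cast_nonneg : (0 : ℝ) ≤ W)], fun n => ?_⟩
  have hsqrt : (Nat.sqrt n.natAbs : ℝ) ≤ √|(n : ℝ)| := by
    simpa [Nat.cast_natAbs] using Real.nat_sqrt_le_real_sqrt (a := n.natAbs)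
  have hle : (wlen A (z ^ n) : ℝ) ≤ 2 * Nat.sqrt n.natAbs * W := by
    exact_mod_cast (hA.wlen_zpow_le z n).trans (wlen_z_pow_le hA n.natAbs)
  nlinarith [Real.sqrt_nonneg |(n : ℝ)|, (W.cast_nonneg : (0 : ℝ) ≤ W)]

variable (p q : ℝ)

def dirComp (g : Heis) : ℝ := p * g.a + q * g.b

def perpComp (g : Heis) : ℝ := q * g.a - p * g.b

noncomputable def dirArea (g : Heis) : ℝ :=
  (p ^ 2 + q ^ 2) * (g.c - g.a * g.b / 2) - dirComp p q g * perpComp p q g / 2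

lemma dirComp_mul (g h : Heis) : dirComp p q (g * h) = dirComp p q g + dirComp p q h := by
  simp only [dirComp, mul_a, mul_b]; push_cast; ring

lemma dirComp_one : dirComp p q 1 = 0 := by simp [dirComp]

lemma dirArea_mul (g h : Heis) :
    dirArea p q (g * h) = dirArea p q g + dirArea p q h - dirComp p q g * perpComp p q h := by
  simp only [dirArea, dirComp, perpComp, mul_a, mul_b, mul_c]; push_cast; ring

lemma dirArea_one : dirArea p q 1 = 0 := by simp [dirArea, dirComp, perpComp]

lemma dirArea_z_zpow (n : ℤ) : dirArea p q (z ^ n) = (p ^ 2 + q ^ 2) * n := by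
  simp [dirArea, dirComp, perpComp, z_zpow]

variable {p q}

lemma abs_dirComp_le (hpq : p ^ 2 + q ^ 2 = 1) (g : Heis) :
    |dirComp p q g| ≤ |(g.a : ℝ)| + |(g.b : ℝ)| := by
  have hp : |p| ≤ 1 := (sq_le_one_iff_abs_le_one p).1 (by nlinarith [sq_nonneg q])
  have hq : |q| ≤ 1 := (sq_le_one_iff_abs_le_one q).1 (by nlinarith [sq_nonneg p])
  calc |dirComp p q g| ≤ |p| * |(g.a : ℝ)| + |q| * |(g.b : ℝ)| := by
        simpa only [dirComp, abs_mul] using abs_add_le (p * g.a) (q * g.b)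
    _ ≤ |(g.a : ℝ)| + |(g.b : ℝ)| :=
      add_le_add (mul_le_of_le_one_left (abs_nonneg _) hp) (mul_le_of_le_one_left (abs_nonneg _) hq)

lemma abs_perpComp_le (hpq : p ^ 2 + q ^ 2 = 1) (g : Heis) :
    |perpComp p q g| ≤ |(g.a : ℝ)| + |(g.b : ℝ)| := by
  have : perpComp p q g = dirComp q (-p) g := by simp only [perpComp, dirComp]; ring
  exact this ▸ abs_dirComp_le (by linarith) g

lemma abs_dirArea_le (hpq : p ^ 2 + q ^ 2 = 1) (g : Heis) :
    |dirArea p q g| ≤ |(g.c - g.a * g.b / 2 : ℝ)| + (|(g.a : ℝ)| + |(g.b : ℝ)|) ^ 2 := by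
  have hprod : |dirComp p q g * perpComp p q g| ≤ (|(g.a : ℝ)| + |(g.b : ℝ)|) ^ 2 := by
    rw [abs_mul, sq]
    exact mul_le_mul (abs_dirComp_le hpq g) (abs_perpComp_le hpq g) (abs_nonneg _)
      (by positivity)
  rw [dirArea, hpq, one_mul]
  calc _ ≤ |(g.c - g.a * g.b / 2 : ℝ)| + |dirComp p q g * perpComp p q g / 2| := abs_sub _ _
    _ ≤ _ := by rw [abs_div, abs_two]; linarith [abs_nonneg (dirComp p q g * perpComp p q g)]


lemma abs_dirComp_prod_le (hpq : p ^ 2 + q ^ 2 = 1) {M : ℝ} {w : List Heis}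
    (hw : ∀ a ∈ w, |(a.a : ℝ)| + |(a.b : ℝ)| ≤ M) :
    |dirComp p q w.prod| ≤ w.length * M := by
  simpa [dirComp_one] using abs_sub_le_length_mul_of_step_le (dirComp p q) M w fun u a hu => by
    rw [dirComp_mul, add_sub_cancel_left]
    exact (abs_dirComp_le hpq a).trans (hw a (hu.subset (by simp)))

lemma abs_dirArea_prod_le (hpq : p ^ 2 + q ^ 2 = 1) {M F : ℝ} {w : List Heis}
    (hw : ∀ a ∈ w, |(a.a : ℝ)| + |(a.b : ℝ)| ≤ M ∧ |dirArea p q a| ≤ M)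
    (hF : ∀ u, u <+: w → |dirComp p q u.prod| ≤ F) :
    |dirArea p q w.prod| ≤ w.length * (M + F * M) := by
  have hF0 : 0 ≤ F := (abs_nonneg _).trans (hF [] List.nil_prefix)
  have hsteps : ∀ u a, u ++ [a] <+: w →
      |dirArea p q (u.prod * a) - dirArea p q u.prod| ≤ M + F * M := by
    intro u a hu
    obtain ⟨haM, hareaM⟩ := hw a (hu.subset (by simp))
    have hstep : dirArea p q (u.prod * a) - dirArea p q u.prod
        = dirArea p q a - dirComp p q u.prod * perpComp p q a := by
      rw [dirArea_mul]; ring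
    calc |dirArea p q (u.prod * a) - dirArea p q u.prod|
        ≤ |dirArea p q a| + |dirComp p q u.prod| * |perpComp p q a| := by
          rw [hstep, ← abs_mul]; exact abs_sub _ _
      _ ≤ M + F * M := by
          gcongr
          · exact hF u ((List.prefix_append u [a]).trans hu)
          · exact (abs_perpComp_le hpq a).trans haM
  simpa [dirArea_one] using abs_sub_le_length_mul_of_step_le _ _ w hsteps

lemma sqrt_abs_le_of_prod_eq_z_zpow (hpq : p ^ 2 + q ^ 2 = 1) {K M F : ℝ} (hK : 0 ≤ K)
    (hM : 0 ≤ M) {n : ℤ} {w : List Heis}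
    (hw : ∀ a ∈ w, |(a.a : ℝ)| + |(a.b : ℝ)| ≤ M ∧ |dirArea p q a| ≤ M)
    (hF : ∀ u, u <+: w → |dirComp p q u.prod| ≤ F)
    (hprod : w.prod = z ^ n) (hlen : (w.length : ℝ) ≤ K * √|(n : ℝ)|) :
    √|(n : ℝ)| ≤ K * M * (1 + F) := by
  have hF0 : 0 ≤ F := (abs_nonneg _).trans (hF [] List.nil_prefix)
  have harea : |(n : ℝ)| ≤ w.length * (M + F * M) := by
    simpa [hprod, dirArea_z_zpow, hpq] using abs_dirArea_prod_le hpq hw hF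
  refine Real.sqrt_le_of_le_mul_sqrt (by positivity) ?_
  calc |(n : ℝ)| ≤ K * √|(n : ℝ)| * (M + F * M) := harea.trans (by gcongr)
    _ = K * M * (1 + F) * √|(n : ℝ)| := by ring

lemma exists_letter_bound (A : Finset Heis) :
    ∃ M : ℝ, 1 ≤ M ∧ ∀ a, (a ∈ A ∨ a⁻¹ ∈ A) → ∀ {p q : ℝ}, p ^ 2 + q ^ 2 = 1 →
      |(a.a : ℝ)| + |(a.b : ℝ)| ≤ M ∧ |dirArea p q a| ≤ M := by
  obtain ⟨M, hM⟩ := exists_bound_on_letters A fun g : Heis =>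
    |(g.c - g.a * g.b / 2 : ℝ)| + (|(g.a : ℝ)| + |(g.b : ℝ)|) ^ 2 + (|(g.a : ℝ)| + |(g.b : ℝ)|)
  refine ⟨max M 1, le_max_right _ _, fun a ha p q hpq => ?_⟩
  have hsize := (hM a ha).trans (le_max_left M 1)
  have harea := abs_dirArea_le hpq a
  constructor <;> nlinarith [abs_nonneg (a.c - a.a * a.b / 2 : ℝ), abs_nonneg (a.a : ℝ),
    abs_nonneg (a.b : ℝ)]

end Heis

/-- Proposition `dirvar`. For every finite generating set `A` of the
discrete Heisenberg group there are `C, D, E ∈ ℝ` with `D > 0` such that for every `n ∈ ℤ`,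
every minimal-length word `a₁⋯a_m` in the letters of `A ∪ A⁻¹` representing `z^n`, and every
linear functional `f : ℝ² → ℝ` of norm `1`, there is a subword `u₂` (so `a₁⋯a_m = u₁ u₂ u₃`)
with `C√|n| ≥ l(u₂) ≥ D√|n| − E` and `C√|n| ≥ |f(φ(u₂))| ≥ D√|n| − E`. -/
theorem heisenberg_dirvar
    (A : Finset Heis) (hA : IsGenSet A) :
    ∃ C D E : ℝ, 0 < D ∧
      ∀ (n : ℤ) (w : List Heis),
        IsWordOn A w → w.prod = Heis.z ^ n → w.length = wlen A (Heis.z ^ n) →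
        ∀ f : EuclideanSpace ℝ (Fin 2) →L[ℝ] ℝ, ‖f‖ = 1 →
          ∃ u₁ u₂ u₃ : List Heis, w = u₁ ++ u₂ ++ u₃ ∧
            (u₂.length : ℝ) ≤ C * Real.sqrt |(n : ℝ)| ∧
            D * Real.sqrt |(n : ℝ)| - E ≤ (u₂.length : ℝ) ∧
            |f (toE2 (Heis.φ u₂.prod))| ≤ C * Real.sqrt |(n : ℝ)| ∧
            D * Real.sqrt |(n : ℝ)| - E ≤ |f (toE2 (Heis.φ u₂.prod))| := by
  obtain ⟨K, hK, hwlen⟩ := Heis.exists_wlen_z_zpow_le hA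
  obtain ⟨M, hM, hletter⟩ := Heis.exists_letter_bound A
  refine ⟨K * M, 1 / (K * M) ^ 2, 1, by positivity, fun n w hw hprod hlen f hf => ?_⟩
  obtain ⟨p, q, hpq, hfpq⟩ := exists_apply_toE2_eq f
  rw [hf, one_pow] at hpq
  have hwM : ∀ a ∈ w, _ := fun a ha => hletter a (hw a ha) hpq
  obtain ⟨u, ⟨t, rfl⟩, hmax⟩ := w.exists_prefix_forall_le fun v => |Heis.dirComp p q v.prod|
  have hfu : |f (toE2 (Heis.φ u.prod))| = |Heis.dirComp p q u.prod| := congrArg abs (hfpq _)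
  have hwK : ((u ++ t).length : ℝ) ≤ K * √|(n : ℝ)| := hlen ▸ hwlen n
  have huK : (u.length : ℝ) ≤ K * √|(n : ℝ)| :=
    le_trans (by exact_mod_cast (List.prefix_append u t).length_le) hwK
  have hFu : |Heis.dirComp p q u.prod| ≤ u.length * M :=
    Heis.abs_dirComp_prod_le hpq fun a ha => (hwM a (List.mem_append_left t ha)).1
  have hs := Heis.sqrt_abs_le_of_prod_eq_z_zpow hpq (by positivity) (by positivity) hwM hmax
    hprod hwK
  have hFB : |Heis.dirComp p q u.prod| ≤ K * M * u.length := hFu.trans <| by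
    have hLM : (0 : ℝ) ≤ u.length * M := by positivity
    nlinarith [mul_le_mul_of_nonneg_right hK hLM]
  obtain ⟨hlowF, hlowL⟩ :=
    one_div_sq_mul_sub_one_le (one_le_mul_of_one_le_of_one_le hK hM) (abs_nonneg _) hFB hs
  refine ⟨[], u, t, rfl, ?_, hlowL, ?_, hfu ▸ hlowF⟩
  · nlinarith [Real.sqrt_nonneg |(n : ℝ)|]
  · rw [hfu]; nlinarith [Real.sqrt_nonneg |(n : ℝ)|]
end

section
/- Let m ∈ ℕ and let b₁, b₂, …, b_m be positive real numbers with b₁ + b₂ + ⋯ + b_m = 1. Then for every n ∈ ℕ ∪ {0} and every i ∈ {1, …, m} there exist nonnegative integers b_{n,i} such that: (1) b_{0,i} = 0 for all i; (2) Σ_{i=1}^m b_{n,i} = n for all n; (3) for each i, the sequence n ↦ b_{n,i} is nondecreasing; and (4) |b_{n,i} − n·b_i| < m for all n and i. Moreover, for each n ≥ 1 there is exactly one index j with b_{n,j} = b_{n−1,j} + 1, and b_{n,i} = b_{n−1,i} for all i ≠ j. -/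
noncomputable def IApick {m : ℕ} (b : Fin m → ℝ) (hm : 0 < m)
    (n : ℕ) (v : Fin m → ℕ) : Fin m :=
  (Finset.exists_max_image Finset.univ (fun i => (n + 1 : ℝ) * b i - v i)
    ⟨⟨0, hm⟩, Finset.mem_univ _⟩).choose

lemma IApick_spec {m : ℕ} (b : Fin m → ℝ) (hm : 0 < m) (n : ℕ) (v : Fin m → ℕ) :
    ∀ i, (n + 1 : ℝ) * b i - v i ≤ (n + 1 : ℝ) * b (IApick b hm n v) - v (IApick b hm n v) := by
  have h := (Finset.exists_max_image Finset.univ (fun i => (n + 1 : ℝ) * b i - v i)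
    ⟨⟨0, hm⟩, Finset.mem_univ _⟩).choose_spec
  exact fun i => h.2 i (Finset.mem_univ i)

noncomputable def IAB {m : ℕ} (b : Fin m → ℝ) (hm : 0 < m) : ℕ → Fin m → ℕ
  | 0 => fun _ => 0
  | n + 1 => fun i =>
      IAB b hm n i + if i = IApick b hm n (IAB b hm n) then 1 else 0

lemma IAB_sum {m : ℕ} (b : Fin m → ℝ) (hm : 0 < m) (n : ℕ) :
    ∑ i, IAB b hm n i = n := by
  induction n with
  | zero => simp [IAB]
  | succ n ih =>
    simp only [IAB, Finset.sum_add_distrib, ih, Finset.sum_ite_eq', Finset.mem_univ,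
      if_true]

lemma IAB_inv {m : ℕ} (b : Fin m → ℝ) (hm : 0 < m) (hb : ∀ i, 0 < b i)
    (hsum : ∑ i, b i = 1) (n : ℕ) (i : Fin m) :
    (IAB b hm n i : ℝ) < n * b i + 1 := by
  induction n generalizing i with
  | zero => simp [IAB]
  | succ n ih =>
    have hpos : 0 < (n + 1 : ℝ) * b (IApick b hm n (IAB b hm n))
        - IAB b hm n (IApick b hm n (IAB b hm n)) := by
      by_contra h
      push_neg at h
      have hsum0 : ∑ k, ((n + 1 : ℝ) * b k - IAB b hm n k) ≤ 0 :=
        Finset.sum_nonpos fun k _ =>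
          le_trans (IApick_spec b hm n (IAB b hm n) k) h
      have heq : ∑ k, ((n + 1 : ℝ) * b k - IAB b hm n k) = 1 := by
        rw [Finset.sum_sub_distrib, ← Finset.mul_sum, hsum]
        have : ∑ k, (IAB b hm n k : ℝ) = n := by
          rw [← Nat.cast_sum, IAB_sum]
        rw [this]; ring
      linarith
    by_cases hij : i = IApick b hm n (IAB b hm n)
    · have h1 : (IAB b hm (n + 1) i : ℝ) = IAB b hm n i + 1 := by
        simp [IAB, hij]
      rw [h1, hij]
      push_cast
      linarith
    · have h1 : (IAB b hm (n + 1) i : ℝ) = IAB b hm n i := by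
        simp [IAB, hij]
      rw [h1]
      have := ih i
      have hbi := hb i
      push_cast
      nlinarith

/-- Lemma `intapprox`. Let `b₁, …, b_m` be positive reals summing to `1`.
Then there are nonnegative integers `b_{n,i}` with `b_{0,i} = 0`, `Σᵢ b_{n,i} = n`,
`n ↦ b_{n,i}` nondecreasing, and `|b_{n,i} − n bᵢ| < m` for all `n, i`; moreover at each step
exactly one entry increases, by `1`. -/
theorem integer_approximation_sequence
    (m : ℕ) (b : Fin m → ℝ) (hb : ∀ i, 0 < b i) (hsum : ∑ i, b i = 1) :
    ∃ B : ℕ → Fin m → ℕ,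
      (∀ i, B 0 i = 0) ∧
      (∀ n, ∑ i, B n i = n) ∧
      (∀ i, Monotone fun n => B n i) ∧
      (∀ n i, |(B n i : ℝ) - (n : ℝ) * b i| < (m : ℝ)) ∧
      (∀ n : ℕ, ∃! j : Fin m, B (n + 1) j = B n j + 1) ∧
      (∀ n : ℕ, ∀ j : Fin m, B (n + 1) j = B n j + 1 →
        ∀ i : Fin m, i ≠ j → B (n + 1) i = B n i) := by
  have hm : 0 < m := by
    rcases Nat.eq_zero_or_pos m with h | h
    · subst h; simp at hsum
    · exact h
  refine ⟨IAB b hm, fun i => rfl, IAB_sum b hm, ?_, ?_, ?_, ?_⟩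
  · -- monotone
    intro i
    refine monotone_nat_of_le_succ fun n => ?_
    simp only [IAB]
    exact Nat.le_add_right _ _
  · -- bound
    intro n i
    have hupper : (IAB b hm n i : ℝ) - n * b i < 1 := by
      have := IAB_inv b hm hb hsum n i
      linarith
    have hlower : (n : ℝ) * b i - IAB b hm n i ≤ (m : ℝ) - 1 := by
      -- n b i - B i = ∑_{k≠i} (B k - n b k) ≤ (m-1)
      have hzero : ∑ k, ((IAB b hm n k : ℝ) - n * b k) = 0 := by
        rw [Finset.sum_sub_distrib, ← Finset.mul_sum, hsum]
        have : ∑ k, (IAB b hm n k : ℝ) = n := by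
          rw [← Nat.cast_sum, IAB_sum]
        rw [this]; ring
      have hsplit : ((IAB b hm n i : ℝ) - n * b i)
          + ∑ k ∈ Finset.univ.erase i, ((IAB b hm n k : ℝ) - n * b k) = 0 := by
        rw [← hzero, ← Finset.add_sum_erase _ _ (Finset.mem_univ i)]
      have hrest : ∑ k ∈ Finset.univ.erase i, ((IAB b hm n k : ℝ) - n * b k)
          ≤ ((m : ℝ) - 1) := by
        have hcard : (Finset.univ.erase i).card = m - 1 := by
          rw [Finset.card_erase_of_mem (Finset.mem_univ i), Finset.card_univ,
            Fintype.card_fin]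
        calc ∑ k ∈ Finset.univ.erase i, ((IAB b hm n k : ℝ) - n * b k)
            ≤ ∑ k ∈ Finset.univ.erase i, (1 : ℝ) := by
              refine Finset.sum_le_sum fun k _ => ?_
              have := IAB_inv b hm hb hsum n k
              linarith
          _ = ((m : ℝ) - 1) := by
              rw [Finset.sum_const, hcard, nsmul_eq_mul, mul_one]
              have : ((m - 1 : ℕ) : ℝ) = (m : ℝ) - 1 := by
                rw [Nat.cast_sub hm]; norm_num
              rw [this]
      linarith
    rw [abs_sub_lt_iff]
    constructor
    · have : (1 : ℝ) ≤ m := by exact_mod_cast hm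
      linarith
    · have : (m : ℝ) - 1 < m := by linarith
      linarith
  · -- exactly one increase
    intro n
    refine ⟨IApick b hm n (IAB b hm n), by simp [IAB], fun j hjj => ?_⟩
    by_contra hne
    have : IAB b hm (n + 1) j = IAB b hm n j := by simp [IAB, hne]
    omega
  · -- others unchanged
    intro n j hjj i hij
    by_cases h : i = IApick b hm n (IAB b hm n)
    · exfalso
      have hj' : j = IApick b hm n (IAB b hm n) := by
        by_contra hne
        have : IAB b hm (n + 1) j = IAB b hm n j := by simp [IAB, hne]
        omega
      exact hij (h.trans hj'.symm)
    · simp [IAB, h]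
end
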